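/- Let (X,d) be a metric space, f any unbounded modulus function, (A_k) a sequence in CL(X) and A ∈ CL(X). If (A_k) is Wijsman f-strong Cesàro convergent to A, then (A_k) is Wijsman f-statistically convergent to A and (A_k) is Wijsman uniformly integrable. -/

import Mathlib

/-!
Subadditivity and monotonicity of a modulus `f` give `f x ≤ ⌈c⌉ f y` whenever `x ≤ c y`.
With the Markov bound `ε · #{j < n | ε < |x j - L|} ≤ ∑_{j<n} |x j - L|` this turns
`f`-strong Cesàro convergence into `f`-statistical convergence. Applied to `n ≤ ε⁻¹ S n` it
shows that `f (S n) / f n → 0` forces `S n / n → 0`, i.e. ordinary strong Cesàro convergence;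
that gives uniform integrability, because `|x j| ≤ 2 |x j - L|` as soon as `|x j| ≥ 2 |L|`,
while a large cutoff kills every term among the first `N`.
-/

open Filter Metric Set

/-- `f : ℝ → ℝ` is an (unbounded) modulus function (considered on `[0,∞)`):
`f x = 0 ↔ x = 0`, subadditive, increasing, continuous from the right at `0`,
and unbounded. -/
def IsModulus (f : ℝ → ℝ) : Prop :=
  (∀ x ∈ Set.Ici (0:ℝ), 0 ≤ f x) ∧
  (∀ x ∈ Set.Ici (0:ℝ), (f x = 0 ↔ x = 0)) ∧
  (∀ x ∈ Set.Ici (0:ℝ), ∀ y ∈ Set.Ici (0:ℝ), f (x + y) ≤ f x + f y) ∧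
  MonotoneOn f (Set.Ici (0:ℝ)) ∧
  ContinuousWithinAt f (Set.Ici (0:ℝ)) 0 ∧
  (∀ M : ℝ, ∃ x ∈ Set.Ici (0:ℝ), M < f x)

/-- `φ(ε) = limsup_n f(nε)/f(n)`. -/
noncomputable def modPhi (f : ℝ → ℝ) (ε : ℝ) : ℝ :=
  Filter.limsup (fun n : ℕ => f ((n : ℝ) * ε) / f (n : ℝ)) Filter.atTop

/-- A modulus function is compatible if `φ(ε) → 0` as `ε → 0⁺`. -/
def Compatible (f : ℝ → ℝ) : Prop :=
  Filter.Tendsto (modPhi f) (nhdsWithin 0 (Set.Ioi 0)) (nhds 0)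

/-- Wijsman statistical convergence of a sequence of subsets of a metric space. -/
def WijsmanStatConv {X : Type*} [MetricSpace X] (A : ℕ → Set X) (B : Set X) : Prop :=
  ∀ x : X, ∀ ε > (0:ℝ),
    Filter.Tendsto (fun n : ℕ =>
      (((Finset.range n).filter
        (fun j => ε < |infDist x (A j) - infDist x B|)).card : ℝ) / (n : ℝ))
      Filter.atTop (nhds 0)

/-- Wijsman `f`-statistical convergence of a sequence of subsets of a metric space. -/
def WijsmanFStatConv {X : Type*} [MetricSpace X] (f : ℝ → ℝ) (A : ℕ → Set X)
    (B : Set X) : Prop :=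
  ∀ x : X, ∀ ε > (0:ℝ),
    Filter.Tendsto (fun n : ℕ =>
      f ((((Finset.range n).filter
        (fun j => ε < |infDist x (A j) - infDist x B|)).card : ℝ)) / f (n : ℝ))
      Filter.atTop (nhds 0)

/-- A real sequence is `f`-strong Cesàro convergent to `L`. -/
def FStrongCesaro (f : ℝ → ℝ) (x : ℕ → ℝ) (L : ℝ) : Prop :=
  Filter.Tendsto (fun n : ℕ =>
    f (∑ j ∈ Finset.range n, |x j - L|) / f (n : ℝ)) Filter.atTop (nhds 0)

/-- Wijsman `f`-strong Cesàro convergence. -/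
def WijsmanFStrongCesaro {X : Type*} [MetricSpace X] (f : ℝ → ℝ) (A : ℕ → Set X)
    (B : Set X) : Prop :=
  ∀ x : X, FStrongCesaro f (fun j => infDist x (A j)) (infDist x B)

/-- Wijsman strong Cesàro convergence (the case `f = id`). -/
def WijsmanStrongCesaro {X : Type*} [MetricSpace X] (A : ℕ → Set X) (B : Set X) : Prop :=
  ∀ x : X,
    Filter.Tendsto (fun n : ℕ =>
      (∑ j ∈ Finset.range n, |infDist x (A j) - infDist x B|) / (n : ℝ))
      Filter.atTop (nhds 0)

/-- A real sequence is uniformly integrable. -/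
def UnifIntegrable (x : ℕ → ℝ) : Prop :=
  Filter.Tendsto (fun c : ℝ =>
    ⨆ n : ℕ, (∑ j ∈ Finset.range n, if c ≤ |x j| then |x j| else 0) / (n : ℝ))
    Filter.atTop (nhds 0)

/-- Wijsman uniform integrability. -/
def WijsmanUnifIntegrable {X : Type*} [MetricSpace X] (A : ℕ → Set X) : Prop :=
  ∀ x : X, UnifIntegrable (fun j => infDist x (A j))

/-- A lacunary sequence: strictly increasing, starting at `0`,
with gaps `h_r = k_{r+1} - k_r → ∞`. -/
def IsLacunary (k : ℕ → ℕ) : Prop :=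
  k 0 = 0 ∧ StrictMono k ∧
    Filter.Tendsto (fun r : ℕ => k (r + 1) - k r) Filter.atTop Filter.atTop

/-- The gaps `h_r` of a lacunary sequence. -/
def lacH (k : ℕ → ℕ) (r : ℕ) : ℕ := k (r + 1) - k r

/-- The blocks `I_r = (k_r, k_{r+1}]` of a lacunary sequence. -/
def lacI (k : ℕ → ℕ) (r : ℕ) : Finset ℕ := Finset.Ioc (k r) (k (r + 1))

/-- `φ_θ(ε) = limsup_t f(h_t ε)/f(h_t)`. -/
noncomputable def modPhiTheta (f : ℝ → ℝ) (k : ℕ → ℕ) (ε : ℝ) : ℝ :=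
  Filter.limsup (fun t : ℕ => f ((lacH k t : ℝ) * ε) / f ((lacH k t : ℝ))) Filter.atTop

/-- `f` is `θ`-compatible if `φ_θ(ε) → 0` as `ε → 0⁺`. -/
def ThetaCompatible (f : ℝ → ℝ) (k : ℕ → ℕ) : Prop :=
  Filter.Tendsto (modPhiTheta f k) (nhdsWithin 0 (Set.Ioi 0)) (nhds 0)

/-- Wijsman `θ`-lacunary statistical convergence. -/
def WijsmanLacStatConv {X : Type*} [MetricSpace X] (k : ℕ → ℕ) (A : ℕ → Set X)
    (B : Set X) : Prop :=
  ∀ x : X, ∀ ε > (0:ℝ),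
    Filter.Tendsto (fun r : ℕ =>
      (((lacI k r).filter
        (fun j => ε < |infDist x (A j) - infDist x B|)).card : ℝ) / (lacH k r : ℝ))
      Filter.atTop (nhds 0)

/-- Wijsman `θ`-lacunary `f`-statistical convergence. -/
def WijsmanLacFStatConv {X : Type*} [MetricSpace X] (f : ℝ → ℝ) (k : ℕ → ℕ)
    (A : ℕ → Set X) (B : Set X) : Prop :=
  ∀ x : X, ∀ ε > (0:ℝ),
    Filter.Tendsto (fun r : ℕ =>
      f ((((lacI k r).filter
        (fun j => ε < |infDist x (A j) - infDist x B|)).card : ℝ)) / f ((lacH k r : ℝ)))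
      Filter.atTop (nhds 0)

/-- Wijsman `θ`-lacunary `f`-strong Cesàro convergence. -/
def WijsmanLacFStrongCesaro {X : Type*} [MetricSpace X] (f : ℝ → ℝ) (k : ℕ → ℕ)
    (A : ℕ → Set X) (B : Set X) : Prop :=
  ∀ x : X,
    Filter.Tendsto (fun r : ℕ =>
      f (∑ j ∈ lacI k r, |infDist x (A j) - infDist x B|) / f ((lacH k r : ℝ)))
      Filter.atTop (nhds 0)

/-- Wijsman `θ`-lacunary strong Cesàro convergence (the case `f = id`). -/
def WijsmanLacStrongCesaro {X : Type*} [MetricSpace X] (k : ℕ → ℕ)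
    (A : ℕ → Set X) (B : Set X) : Prop :=
  ∀ x : X,
    Filter.Tendsto (fun r : ℕ =>
      (∑ j ∈ lacI k r, |infDist x (A j) - infDist x B|) / (lacH k r : ℝ))
      Filter.atTop (nhds 0)

/-- A real sequence is `θ`-lacunary uniformly integrable. -/
def LacUnifIntegrable (k : ℕ → ℕ) (x : ℕ → ℝ) : Prop :=
  Filter.Tendsto (fun M : ℝ =>
    ⨆ t : ℕ, (∑ j ∈ lacI k t, if M ≤ |x j| then |x j| else 0) / (lacH k t : ℝ))
    Filter.atTop (nhds 0)

/-- Wijsman `θ`-lacunary uniform integrability. -/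
def WijsmanLacUnifIntegrable {X : Type*} [MetricSpace X] (k : ℕ → ℕ)
    (A : ℕ → Set X) : Prop :=
  ∀ x : X, LacUnifIntegrable k (fun j => infDist x (A j))

open Finset

namespace IsModulus

variable {f : ℝ → ℝ} (hf : IsModulus f)
include hf

lemma map_zero : f 0 = 0 :=
  (hf.2.1 0 (Set.mem_Ici.2 le_rfl)).mpr rfl

lemma nonneg {x : ℝ} (hx : 0 ≤ x) : 0 ≤ f x :=
  hf.1 x hx

lemma pos {x : ℝ} (hx : 0 < x) : 0 < f x :=
  (hf.nonneg hx.le).lt_of_ne fun h => hx.ne' ((hf.2.1 x hx.le).mp h.symm)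

lemma mono {x y : ℝ} (hx : 0 ≤ x) (hxy : x ≤ y) : f x ≤ f y :=
  hf.2.2.2.1 hx (hx.trans hxy) hxy

lemma map_natCast_mul_le (k : ℕ) {x : ℝ} (hx : 0 ≤ x) : f (k * x) ≤ k * f x := by
  induction k with
  | zero => simp [hf.map_zero]
  | succ k ih =>
    calc f ((k + 1 : ℕ) * x) = f (k * x + x) := by push_cast; ring_nf
      _ ≤ f (k * x) + f x := hf.2.2.1 _ (Set.mem_Ici.2 (by positivity)) x hx
      _ ≤ (k + 1 : ℕ) * f x := by push_cast; linarith

lemma le_ceil_mul_of_le_mul {x y c : ℝ} (hx : 0 ≤ x) (hy : 0 ≤ y) (hxy : x ≤ c * y) :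
    f x ≤ ⌈c⌉₊ * f y :=
  calc f x ≤ f (⌈c⌉₊ * y) := hf.mono hx (hxy.trans (by gcongr; exact Nat.le_ceil c))
    _ ≤ ⌈c⌉₊ * f y := hf.map_natCast_mul_le _ hy

lemma tendsto_div_of_le_mul {S T : ℕ → ℝ} {c : ℝ} (hS : ∀ n, 0 ≤ S n) (hT : ∀ n, 0 ≤ T n)
    (hTS : ∀ n, T n ≤ c * S n)
    (h : Tendsto (fun n : ℕ => f (S n) / f n) atTop (nhds 0)) :
    Tendsto (fun n : ℕ => f (T n) / f n) atTop (nhds 0) := by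
  refine squeeze_zero (fun n => div_nonneg (hf.nonneg (hT n)) (hf.nonneg n.cast_nonneg))
    (fun n => ?_) (by simpa using h.const_mul (⌈c⌉₊ : ℝ))
  rw [mul_div_assoc']
  exact div_le_div_of_nonneg_right (hf.le_ceil_mul_of_le_mul (hT n) (hS n) (hTS n))
    (hf.nonneg n.cast_nonneg)

lemma tendsto_div_natCast_of_tendsto_div {S : ℕ → ℝ} (hS : ∀ n, 0 ≤ S n)
    (h : Tendsto (fun n : ℕ => f (S n) / f n) atTop (nhds 0)) :
    Tendsto (fun n : ℕ => S n / n) atTop (nhds 0) := by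
  refine tendsto_order.2 ⟨fun a ha => Eventually.of_forall fun n =>
    ha.trans_le (div_nonneg (hS n) n.cast_nonneg), fun ε hε => ?_⟩
  have hm : (0 : ℝ) < ⌈ε⁻¹⌉₊ := by simpa using inv_pos.2 hε
  filter_upwards [(tendsto_order.1 h).2 _ (inv_pos.2 hm), eventually_ge_atTop 1]
    with n hlt hn_one
  have hn : (0 : ℝ) < n := by exact_mod_cast hn_one
  rw [div_lt_iff₀ hn]
  by_contra! hle
  have hfn_le : f n ≤ ⌈ε⁻¹⌉₊ * f (S n) :=
    hf.le_ceil_mul_of_le_mul hn.le (hS n) (by rw [le_inv_mul_iff₀ hε]; linarith)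
  have hfS_lt := mul_lt_mul_of_pos_left ((div_lt_iff₀ (hf.pos hn)).1 hlt) hm
  rw [← mul_assoc, mul_inv_cancel₀ hm.ne', one_mul] at hfS_lt
  linarith

end IsModulus

lemma card_filter_lt_mul_le_sum {ι : Type*} (s : Finset ι) (g : ι → ℝ) (ε : ℝ)
    (hg : ∀ i, 0 ≤ g i) : (#{i ∈ s | ε < g i} : ℝ) * ε ≤ ∑ i ∈ s, g i :=
  calc (#{i ∈ s | ε < g i} : ℝ) * ε ≤ ∑ i ∈ s with ε < g i, g i := by
        simpa using card_nsmul_le_sum _ g ε fun i hi => (mem_filter.1 hi).2.le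
    _ ≤ ∑ i ∈ s, g i :=
        sum_le_sum_of_subset_of_nonneg (filter_subset _ _) fun i _ _ => hg i

lemma sum_ite_le_le_two_mul_sum_abs_sub (x : ℕ → ℝ) {L c : ℝ} (hc : 2 * |L| ≤ c) (n : ℕ) :
    ∑ j ∈ range n, (if c ≤ |x j| then |x j| else 0) ≤
      2 * ∑ j ∈ range n, |x j - L| := by
  rw [mul_sum]
  refine sum_le_sum fun j _ => ?_
  split_ifs with hj
  · linarith [abs_sub_abs_le_abs_sub (x j) L]
  · positivity

lemma sum_ite_le_eq_zero (x : ℕ → ℝ) {N n : ℕ} {c : ℝ}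
    (hc : ∑ j ∈ range N, |x j| < c) (hn : n ≤ N) :
    ∑ j ∈ range n, (if c ≤ |x j| then |x j| else 0) = 0 := by
  refine sum_eq_zero fun j hj => if_neg (not_le.2 (lt_of_le_of_lt ?_ hc))
  exact single_le_sum (fun i _ => abs_nonneg (x i))
    (mem_range.2 ((mem_range.1 hj).trans_le hn))

lemma unifIntegrable_of_tendsto_sum_abs_sub_div {x : ℕ → ℝ} {L : ℝ}
    (h : Tendsto (fun n : ℕ => (∑ j ∈ range n, |x j - L|) / n) atTop (nhds 0)) :
    UnifIntegrable x := by
  have hmean_nonneg : ∀ (c : ℝ) (n : ℕ),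
      0 ≤ (∑ j ∈ range n, if c ≤ |x j| then |x j| else 0) / n := fun c n =>
    div_nonneg (sum_nonneg fun j _ => by split_ifs <;> positivity) n.cast_nonneg
  refine tendsto_order.2 ⟨fun a ha => Eventually.of_forall fun c =>
    ha.trans_le (Real.iSup_nonneg (hmean_nonneg c)), fun ε hε => ?_⟩
  obtain ⟨N, hN⟩ := eventually_atTop.1 ((tendsto_order.1 h).2 (ε / 4) (by positivity))
  filter_upwards [eventually_gt_atTop (2 * |L| + ∑ j ∈ range N, |x j|)] with c hc
  refine (Real.iSup_le (fun n => ?_) (by positivity : 0 ≤ ε / 2)).trans_lt (by linarith)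
  rcases le_total n N with hn | hn
  · rw [sum_ite_le_eq_zero x (by linarith [abs_nonneg L]) hn, zero_div]
    positivity
  · calc (∑ j ∈ range n, if c ≤ |x j| then |x j| else 0) / n
        ≤ 2 * (∑ j ∈ range n, |x j - L|) / n := by
          gcongr
          exact sum_ite_le_le_two_mul_sum_abs_sub x
            (by linarith [sum_nonneg fun j (_ : j ∈ range N) => abs_nonneg (x j)]) n
      _ ≤ ε / 2 := by rw [mul_div_assoc]; linarith [hN n hn]

namespace FStrongCesaro

variable {f : ℝ → ℝ} {x : ℕ → ℝ} {L : ℝ}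

lemma tendsto_card_filter (h : FStrongCesaro f x L) (hf : IsModulus f) {ε : ℝ} (hε : 0 < ε) :
    Tendsto (fun n : ℕ =>
      f (#{j ∈ range n | ε < |x j - L|} : ℝ) / f n) atTop (nhds 0) :=
  hf.tendsto_div_of_le_mul (c := ε⁻¹) (fun _ => sum_nonneg fun _ _ => abs_nonneg _)
    (fun _ => Nat.cast_nonneg _)
    (fun n => by
      rw [inv_mul_eq_div, le_div_iff₀ hε]
      exact card_filter_lt_mul_le_sum _ _ ε fun j => abs_nonneg _) h

lemma unifIntegrable (h : FStrongCesaro f x L) (hf : IsModulus f) : UnifIntegrable x :=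
  unifIntegrable_of_tendsto_sum_abs_sub_div
    (hf.tendsto_div_natCast_of_tendsto_div (fun _ => sum_nonneg fun _ _ => abs_nonneg _) h)

end FStrongCesaro

theorem wijsman_fcesaro_imp_fstat_and_unifInt_general {X : Type*} [MetricSpace X]
    (f : ℝ → ℝ) (hf : IsModulus f)
    (A : ℕ → Set X) (B : Set X)
    (h : WijsmanFStrongCesaro f A B) :
    WijsmanFStatConv f A B ∧ WijsmanUnifIntegrable A :=
  ⟨fun x _ hε => (h x).tendsto_card_filter hf hε, fun x => (h x).unifIntegrable hf⟩

theorem wijsman_fcesaro_imp_fstat_and_unifInt {X : Type*} [MetricSpace X]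
    (f : ℝ → ℝ) (hf : IsModulus f)
    (A : ℕ → Set X) (B : Set X)
    (hA : ∀ n, (A n).Nonempty ∧ IsClosed (A n)) (hB : B.Nonempty ∧ IsClosed B)
    (h : WijsmanFStrongCesaro f A B) :
    WijsmanFStatConv f A B ∧ WijsmanUnifIntegrable A :=
  wijsman_fcesaro_imp_fstat_and_unifInt_general f hf A B h
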